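/- Let c > 0 be a real number, r ≥ 1 an integer, and λ₁ ≤ λ₂ ≤ ... ≤ λ_r nonnegative integers. For every integer m with 0 ≤ m ≤ λ_r, one has c·(λ₁ + ... + λ_r) + Σ_{j : λ_j < m} (m − λ_j) ≥ m · min(r·c, r − 1 + c). -/
import Mathlib


/-- Key combinatorial inequality in Theorem 1(i): for `c > 0`, `r ≥ 1`,
and a nondecreasing tuple of nonnegative integers `λ`, and `m ≤ λ_r`,
`c·|λ| + Σ_{j : λ_j < m} (m − λ_j) ≥ m · min(r·c, r − 1 + c)`. -/
theorem stmt_0 (c : ℝ) (hc : 0 < c) (r : ℕ) (hr : 1 ≤ r)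
    (lam : Fin r → ℕ) (hmono : Monotone lam)
    (m : ℕ) (hm : m ≤ lam ⟨r - 1, by omega⟩) :
    c * (∑ i, (lam i : ℝ)) +
      ∑ j ∈ Finset.univ.filter (fun j => lam j < m), ((m : ℝ) - (lam j : ℝ)) ≥
    (m : ℝ) * min ((r : ℝ) * c) ((r : ℝ) - 1 + c) := by
  set top : Fin r := ⟨r - 1, by omega⟩ with htop
  set g : Fin r → ℝ := fun j => c * (lam j : ℝ) +
      (if lam j < m then (m : ℝ) - (lam j : ℝ) else 0) with hg
  have hLHS : c * (∑ i, (lam i : ℝ)) +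
      ∑ j ∈ Finset.univ.filter (fun j => lam j < m), ((m : ℝ) - (lam j : ℝ))
      = ∑ j, g j := by
    rw [Finset.sum_filter, Finset.mul_sum, ← Finset.sum_add_distrib]
  have hbound : ∀ j, min c 1 * m ≤ g j := by
    intro j
    have hm0 : (0 : ℝ) ≤ m := Nat.cast_nonneg m
    simp only [hg]
    by_cases h : lam j < m
    · have hlm : (lam j : ℝ) ≤ m := by exact_mod_cast h.le
      rw [if_pos h]
      rcases min_cases c 1 with ⟨he, hc1⟩ | ⟨he, hc1⟩ <;> rw [he] <;>
        nlinarith [Nat.cast_nonneg (α := ℝ) (lam j)]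
    · have hlm : (m : ℝ) ≤ lam j := by
        exact_mod_cast Nat.le_of_not_lt h
      rw [if_neg h]
      have : min c 1 * m ≤ c * m := by
        apply mul_le_mul_of_nonneg_right (min_le_left _ _) hm0
      nlinarith
  have htopb : c * m ≤ g top := by
    have h : ¬ lam top < m := not_lt.mpr hm
    simp only [hg, if_neg h]
    have : (m : ℝ) ≤ lam top := by exact_mod_cast hm
    nlinarith
  have hsum : c * m + (r - 1 : ℕ) * (min c 1 * m) ≤ ∑ j, g j := by
    rw [← Finset.add_sum_erase _ g (Finset.mem_univ top)]
    have hcard : ((Finset.univ.erase top).card : ℝ) = (r - 1 : ℕ) := by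
      rw [Finset.card_erase_of_mem (Finset.mem_univ top)]
      simp
    have := Finset.card_nsmul_le_sum (Finset.univ.erase top) g (min c 1 * m)
      (fun j _ => hbound j)
    rw [nsmul_eq_mul, hcard] at this
    linarith
  rw [hLHS]
  refine le_trans ?_ hsum
  have hr1 : (1 : ℝ) ≤ r := by exact_mod_cast hr
  have hrc : ((r - 1 : ℕ) : ℝ) = (r : ℝ) - 1 := by
    have : (r : ℝ) - 1 = ((r : ℕ) : ℝ) - 1 := rfl
    rw [Nat.cast_sub hr]; simp
  rw [hrc]
  have hm0 : (0 : ℝ) ≤ m := Nat.cast_nonneg m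
  rcases min_cases c 1 with ⟨he, hc1⟩ | ⟨he, hc1⟩ <;> rw [he] <;>
    rcases min_cases ((r : ℝ) * c) ((r : ℝ) - 1 + c) with ⟨he2, _⟩ | ⟨he2, _⟩ <;>
    rw [he2] <;> nlinarith
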